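/- Let G and H be nontrivial finite groups and let δ : G ∗ H → M be a group homomorphism from the free product G ∗ H to a group M. If the kernel of δ is finite, then δ is injective. -/

import Mathlib

/-!
A reduced word whose first and last letters lie in different factors has infinite order, since
its powers are again reduced words. A finite normal subgroup `N` of a free product therefore
contains no such word. But if `w ∈ N` is a nontrivial reduced word beginning and ending in the
same factor and `b ≠ 1` lies in another factor, then `w * (b * w * b⁻¹) ∈ N` is one. So `N`,
in particular a finite kernel, is trivial.
-/

open scoped Monoid.Coprod

namespace Monoid.CoprodI

variable {ι : Type*} {M : ι → Type*} [∀ i, Monoid (M i)]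

theorem exists_neWord_prod_eq (x : CoprodI M) (hx : x ≠ 1) :
    ∃ (i j : ι) (w : NeWord M i j), w.prod = x := by
  classical
  have hw : Word.equiv x ≠ Word.empty := fun h => hx <| by
    rw [← Word.equiv.symm_apply_apply x, h]; exact Word.prod_empty
  obtain ⟨i, j, w, hw⟩ := NeWord.of_word _ hw
  exact ⟨i, j, w, by rw [NeWord.prod, hw]; exact Word.equiv.symm_apply_apply x⟩

namespace NeWord

theorem prod_ne_one {i j : ι} (w : NeWord M i j) : w.prod ≠ 1 := fun h => by
  classical
  have : w.toWord = Word.empty := Word.equiv.symm.injective (h.trans Word.prod_empty.symm)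
  exact w.toList_ne_nil (congrArg Word.toList this)

def pow {i j : ι} (w : NeWord M i j) (hji : j ≠ i) : ℕ → NeWord M i j
  | 0 => w
  | n + 1 => w.append hji (w.pow hji n)

theorem prod_pow {i j : ι} (w : NeWord M i j) (hji : j ≠ i) (n : ℕ) :
    (w.pow hji n).prod = w.prod ^ (n + 1) := by
  induction n with
  | zero => simp [pow]
  | succ n ih => rw [pow, append_prod, ih, ← pow_succ']

theorem not_isOfFinOrder_prod {i j : ι} (w : NeWord M i j) (hij : i ≠ j) :
    ¬IsOfFinOrder w.prod := by
  rw [isOfFinOrder_iff_pow_eq_one]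
  rintro ⟨n, hn, hpow⟩
  obtain ⟨n, rfl⟩ := Nat.exists_eq_add_one_of_ne_zero hn.ne'
  exact (w.pow hij.symm n).prod_ne_one (by rw [prod_pow, hpow])

end NeWord

variable {G : ι → Type*} [∀ i, Group (G i)]

theorem exists_index_ne_and_ne_one {i₀ i₁ : ι} (h : i₀ ≠ i₁) [Nontrivial (G i₀)]
    [Nontrivial (G i₁)] (i : ι) : ∃ (k : ι) (b : G k), k ≠ i ∧ b ≠ 1 := by
  by_cases hi : i = i₀
  · obtain ⟨b, hb⟩ := exists_ne (1 : G i₁)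
    exact ⟨i₁, b, hi ▸ h.symm, hb⟩
  · obtain ⟨b, hb⟩ := exists_ne (1 : G i₀)
    exact ⟨i₀, b, Ne.symm hi, hb⟩

theorem eq_bot_of_normal_of_finite {i₀ i₁ : ι} (h : i₀ ≠ i₁) [Nontrivial (G i₀)]
    [Nontrivial (G i₁)] (N : Subgroup (CoprodI G)) [N.Normal] [Finite N] : N = ⊥ := by
  refine (Subgroup.eq_bot_iff_forall N).2 fun x hxN => by_contra fun hx => ?_
  have torsion : ∀ y ∈ N, IsOfFinOrder y := fun y hy =>
    N.subtype.isOfFinOrder (isOfFinOrder_of_finite (⟨y, hy⟩ : N))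
  obtain ⟨i, j, w, rfl⟩ := exists_neWord_prod_eq x hx
  by_cases hij : i = j
  · subst hij
    obtain ⟨k, b, hki, hb⟩ := exists_index_ne_and_ne_one (G := G) h i
    -- the reduced word `w b w b⁻¹`
    let w' : NeWord G i k :=
      w.append hki.symm ((NeWord.singleton b hb).append hki (w.append hki.symm
        (NeWord.singleton b⁻¹ (inv_ne_one.2 hb))))
    have hw' : w'.prod = w.prod * (of b * w.prod * (of b)⁻¹) := by
      simp [w', mul_assoc]
    refine w'.not_isOfFinOrder_prod hki.symm (torsion _ ?_)
    rw [hw']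
    exact N.mul_mem hxN (‹N.Normal›.conj_mem _ hxN _)
  · exact w.not_isOfFinOrder_prod hij (torsion _ hxN)

theorem injective_of_finite_ker {H : Type*} [Group H] {i₀ i₁ : ι} (h : i₀ ≠ i₁)
    [Nontrivial (G i₀)] [Nontrivial (G i₁)] (f : CoprodI G →* H) [Finite f.ker] :
    Function.Injective f :=
  (MonoidHom.ker_eq_bot_iff f).1 (eq_bot_of_normal_of_finite h f.ker)

def mulEquivCoprod (P : Bool → Type*) [∀ b, Monoid (P b)] : CoprodI P ≃* P true ∗ P false :=
  MonoidHom.toMulEquiv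
    (lift fun b =>
      Bool.rec (motive := fun b => P b →* P true ∗ P false) Coprod.inr Coprod.inl b)
    (Coprod.lift of of)
    (ext_hom _ _ fun b => by cases b <;> ext <;> simp)
    (Coprod.hom_ext (by ext; simp) (by ext; simp))

end Monoid.CoprodI

namespace Monoid.Coprod

universe u v

variable (G : Type u) (H : Type v)

abbrev uliftFactors : Bool → Type max u v
  | true => ULift.{v} G
  | false => ULift.{u} H

instance [Group G] [Group H] : ∀ b, Group (uliftFactors G H b)
  | true => inferInstanceAs (Group (ULift G))
  | false => inferInstanceAs (Group (ULift H))

instance [Nontrivial G] : Nontrivial (uliftFactors G H true) :=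
  inferInstanceAs (Nontrivial (ULift G))

instance [Nontrivial H] : Nontrivial (uliftFactors G H false) :=
  inferInstanceAs (Nontrivial (ULift H))

def coprodIMulEquiv [Group G] [Group H] : CoprodI (uliftFactors G H) ≃* G ∗ H :=
  (CoprodI.mulEquivCoprod (uliftFactors G H)).trans
    (MulEquiv.coprodCongr MulEquiv.ulift MulEquiv.ulift)

end Monoid.Coprod

open Monoid

theorem free_product_hom_injective_of_finite_kernel_general
    (G H M : Type*) [Group G] [Group H] [Group M]
    [Nontrivial G] [Nontrivial H]
    (δ : Monoid.Coprod G H →* M) (hker : Finite δ.ker) :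
    Function.Injective δ := by
  let e := Coprod.coprodIMulEquiv G H
  let δ' := δ.comp (e : CoprodI (Coprod.uliftFactors G H) →* G ∗ H)
  have : Finite δ'.ker := by
    rw [MonoidHom.ker_comp_mulEquiv]
    exact .of_equiv _ (δ.ker.equivMapOfInjective _ e.symm.injective).toEquiv
  have hinj := CoprodI.injective_of_finite_ker (by decide : true ≠ false) δ'
  simpa [δ'] using hinj.comp e.symm.injective

theorem free_product_hom_injective_of_finite_kernel
    (G H M : Type*) [Group G] [Group H] [Group M] [Finite G] [Finite H]
    [Nontrivial G] [Nontrivial H]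
    (δ : Monoid.Coprod G H →* M) (hker : Finite δ.ker) :
    Function.Injective δ :=
  free_product_hom_injective_of_finite_kernel_general G H M δ hker
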